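/- Let H : E → ℝ be smooth and U ⊆ E an open set on which the elementary action ρ(x) = Σⱼ pⱼ ∂H/∂pⱼ(x) − H(x) is nonzero. If ζ and ζ' are smooth vector fields on U with L_ζ α_H = 0, L_{ζ'} α_H = 0, and α_H(x)(ζ(x)) = α_H(x)(ζ'(x)) for all x ∈ U, then ζ = ζ' on U. (The Noether symmetry associated to a given Noether integral is unique where ρ ≠ 0.) -/

import Mathlib

noncomputable section
open scoped ContDiff

/-- The extended phase space `E = ℝ × ℝⁿ × ℝⁿ`, with points `x = (t, q, p)`. -/
abbrev EE (n : ℕ) : Type := ℝ × (Fin n → ℝ) × (Fin n → ℝ)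

/-- The Poincaré–Cartan 1-form `α_H = p dq − H dt`:
`α_H(x)(τ̂, ξ̂, η̂) = ∑ i, pᵢ ξ̂ᵢ − H(x) τ̂`. -/
def pcForm {n : ℕ} (H : EE n → ℝ) (x : EE n) : EE n →L[ℝ] ℝ :=
  (∑ i, x.2.2 i • ((ContinuousLinearMap.proj i).comp
      ((ContinuousLinearMap.fst ℝ (Fin n → ℝ) (Fin n → ℝ)).comp
        (ContinuousLinearMap.snd ℝ ℝ ((Fin n → ℝ) × (Fin n → ℝ))))))
    - H x • ContinuousLinearMap.fst ℝ ℝ ((Fin n → ℝ) × (Fin n → ℝ))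

/-- The vector field `Z_H(x) = (1, ∂H/∂p(x), −∂H/∂q(x))` of Hamilton's equations. -/
def ZH {n : ℕ} (H : EE n → ℝ) (x : EE n) : EE n :=
  (1, fun i => fderiv ℝ H x (0, 0, Pi.single i 1),
      fun i => - fderiv ℝ H x (0, Pi.single i 1, 0))

/-- The Lie derivative of a 1-form `α` along a vector field `ζ`:
`(L_ζ α)(x)(v) = (Dα(x)(ζ(x)))(v) + α(x)(Dζ(x)(v))`. -/
def lieDeriv {n : ℕ} (ζ : EE n → EE n) (α : EE n → (EE n →L[ℝ] ℝ)) (x : EE n) :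
    EE n →L[ℝ] ℝ :=
  fderiv ℝ α x (ζ x) + (α x).comp (fderiv ℝ ζ x)

/-- The exterior derivative of a 1-form:
`dα(x)(u,v) = (Dα(x)u)(v) − (Dα(x)v)(u)`. -/
def extDerivEE {n : ℕ} (α : EE n → (EE n →L[ℝ] ℝ)) (x u v : EE n) : ℝ :=
  fderiv ℝ α x u v - fderiv ℝ α x v u

/-- The elementary action `ρ(x) = ∑ⱼ pⱼ ∂H/∂pⱼ(x) − H(x)`. -/
def elemAction {n : ℕ} (H : EE n → ℝ) (x : EE n) : ℝ :=
  (∑ j, x.2.2 j * fderiv ℝ H x (0, 0, Pi.single j 1)) - H x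

/-! Cartan's formula `L_ζ α = ι_ζ dα + d(α(ζ))` turns the two symmetry conditions and the
equality of the Noether integrals `α_H(ζ) = α_H(ζ')` into `ι_{ζ - ζ'} dα_H = 0`. The kernel of
`dα_H = dp ∧ dq − dH ∧ dt` is the line spanned by the Hamiltonian field `Z_H`, so
`ζ − ζ' = c Z_H`; contracting with `α_H` gives `0 = c α_H(Z_H) = c ρ`, hence `c = 0`. -/

section PoincareCartan

open Filter Topology

variable {n : ℕ}

theorem lieDeriv_apply_eq_extDerivEE_add {α : EE n → EE n →L[ℝ] ℝ} {ζ : EE n → EE n}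
    {x : EE n} (hα : DifferentiableAt ℝ α x) (hζ : DifferentiableAt ℝ ζ x) (v : EE n) :
    lieDeriv ζ α x v = extDerivEE α x (ζ x) v + fderiv ℝ (fun y => α y (ζ y)) x v := by
  rw [(hα.hasFDerivAt.clm_apply hζ.hasFDerivAt).fderiv]
  simp only [lieDeriv, extDerivEE, add_apply,
    ContinuousLinearMap.comp_apply, ContinuousLinearMap.flip_apply]
  ring

theorem extDerivEE_sub_left (α : EE n → EE n →L[ℝ] ℝ) (x u u' v : EE n) :
    extDerivEE α x (u - u') v = extDerivEE α x u v - extDerivEE α x u' v := by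
  simp only [extDerivEE, map_sub, sub_apply]
  ring

theorem extDerivEE_sub_eq_zero_of_lieDeriv_eq_zero {α : EE n → EE n →L[ℝ] ℝ}
    {ζ ζ' : EE n → EE n} {x : EE n} (hα : DifferentiableAt ℝ α x)
    (hζ : DifferentiableAt ℝ ζ x) (hζ' : DifferentiableAt ℝ ζ' x)
    (hL : lieDeriv ζ α x = 0) (hL' : lieDeriv ζ' α x = 0)
    (hint : (fun y => α y (ζ y)) =ᶠ[𝓝 x] fun y => α y (ζ' y)) (v : EE n) :
    extDerivEE α x (ζ x - ζ' x) v = 0 := by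
  have h := lieDeriv_apply_eq_extDerivEE_add hα hζ v
  have h' := lieDeriv_apply_eq_extDerivEE_add hα hζ' v
  rw [hL, zero_apply] at h
  rw [hL', zero_apply, ← hint.fderiv_eq] at h'
  rw [extDerivEE_sub_left]
  linarith

theorem pcForm_apply (H : EE n → ℝ) (x v : EE n) :
    pcForm H x v = ∑ i, x.2.2 i * v.2.1 i - H x * v.1 := by
  simp [pcForm, smul_eq_mul]

theorem pcForm_apply_ZH (H : EE n → ℝ) (x : EE n) : pcForm H x (ZH H x) = elemAction H x := by
  simp [pcForm_apply, ZH, elemAction]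

theorem fderiv_pcForm_apply {H : EE n → ℝ} {x : EE n} (hH : DifferentiableAt ℝ H x)
    (u v : EE n) :
    fderiv ℝ (pcForm H) x u v = ∑ i, u.2.2 i * v.2.1 i - fderiv ℝ H x u * v.1 := by
  have hp (i : Fin n) := ((ContinuousLinearMap.proj (R := ℝ) i).comp
    ((ContinuousLinearMap.snd ℝ (Fin n → ℝ) (Fin n → ℝ)).comp
      (ContinuousLinearMap.snd ℝ ℝ ((Fin n → ℝ) × (Fin n → ℝ))))).hasFDerivAt (x := x)
  have hα := show HasFDerivAt (𝕜 := ℝ) (pcForm H) _ x from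
    (HasFDerivAt.fun_sum fun i _ => (hp i).smul_const _).fun_sub
      (hH.hasFDerivAt.smul_const (ContinuousLinearMap.fst ℝ ℝ ((Fin n → ℝ) × (Fin n → ℝ))))
  rw [hα.fderiv]
  simp [smul_eq_mul]

theorem differentiableAt_pcForm {H : EE n → ℝ} {x : EE n} (hH : DifferentiableAt ℝ H x) :
    DifferentiableAt ℝ (pcForm H) x := by
  unfold pcForm
  fun_prop

theorem extDerivEE_pcForm_apply {H : EE n → ℝ} {x : EE n} (hH : DifferentiableAt ℝ H x)
    (u v : EE n) :
    extDerivEE (pcForm H) x u v =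
      ∑ i, (u.2.2 i * v.2.1 i - v.2.2 i * u.2.1 i)
        - (fderiv ℝ H x u * v.1 - fderiv ℝ H x v * u.1) := by
  simp only [extDerivEE, fderiv_pcForm_apply hH, Finset.sum_sub_distrib]
  ring

theorem eq_smul_ZH_of_extDerivEE_pcForm_eq_zero {H : EE n → ℝ} {x w : EE n}
    (hH : DifferentiableAt ℝ H x) (hw : ∀ v, extDerivEE (pcForm H) x w v = 0) :
    w = w.1 • ZH H x := by
  refine Prod.ext (by simp [ZH]) (Prod.ext (funext fun j => ?_) (funext fun j => ?_))
  · have hj := hw (0, 0, Pi.single j 1)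
    simp only [extDerivEE_pcForm_apply hH, Pi.zero_apply, mul_zero, Pi.single_apply, ite_mul,
      one_mul, zero_mul, zero_sub, Finset.sum_neg_distrib, Finset.sum_ite_eq', Finset.mem_univ,
      ↓reduceIte, sub_neg_eq_add] at hj
    simp only [ZH, Prod.smul_mk, smul_eq_mul, mul_one, Pi.smul_apply]
    linarith
  · have hj := hw (0, Pi.single j 1, 0)
    simp only [extDerivEE_pcForm_apply hH, Pi.single_apply, mul_ite, mul_one, mul_zero,
      Pi.zero_apply, zero_mul, sub_zero, Finset.sum_ite_eq', Finset.mem_univ, ↓reduceIte,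
      zero_sub, sub_neg_eq_add] at hj
    simp only [ZH, Prod.smul_mk, smul_eq_mul, mul_one, Pi.smul_apply, mul_neg]
    linarith

end PoincareCartan

theorem noether_symmetry_unique_general {n : ℕ}
    (H : EE n → ℝ) (hH : ContDiff ℝ ∞ H)
    (U : Set (EE n)) (hU : IsOpen U)
    (hρ : ∀ x ∈ U, elemAction H x ≠ 0)
    (ζ ζ' : EE n → EE n) (hζ : ContDiffOn ℝ ∞ ζ U) (hζ' : ContDiffOn ℝ ∞ ζ' U)
    (hsym : ∀ x ∈ U, lieDeriv ζ (pcForm H) x = 0)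
    (hsym' : ∀ x ∈ U, lieDeriv ζ' (pcForm H) x = 0)
    (hsame : ∀ x ∈ U, pcForm H x (ζ x) = pcForm H x (ζ' x)) :
    ∀ x ∈ U, ζ x = ζ' x := by
  intro x hx
  have hHx : DifferentiableAt ℝ H x := (hH.differentiable (by simp)).differentiableAt
  have hαx := differentiableAt_pcForm hHx
  have hζx : DifferentiableAt ℝ ζ x :=
    (hζ.differentiableOn (by simp) x hx).differentiableAt (hU.mem_nhds hx)
  have hζ'x : DifferentiableAt ℝ ζ' x :=
    (hζ'.differentiableOn (by simp) x hx).differentiableAt (hU.mem_nhds hx)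
  have hker := extDerivEE_sub_eq_zero_of_lieDeriv_eq_zero hαx hζx hζ'x (hsym x hx) (hsym' x hx)
    (Filter.eventuallyEq_of_mem (hU.mem_nhds hx) hsame)
  have hw := eq_smul_ZH_of_extDerivEE_pcForm_eq_zero hHx hker
  have hcρ : (ζ x - ζ' x).1 * elemAction H x = 0 := by
    rw [← pcForm_apply_ZH, ← smul_eq_mul, ← map_smul, ← hw, map_sub, hsame x hx, sub_self]
  have hc : (ζ x - ζ' x).1 = 0 := (mul_eq_zero.1 hcρ).resolve_right (hρ x hx)
  rw [← sub_eq_zero, hw, hc, zero_smul]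

/-- on an open set `U` where the elementary action `ρ ≠ 0`, the Noether
symmetry with a given Noether integral is unique: two Noether symmetries with the
same contraction against `α_H` coincide on `U`. -/
theorem noether_symmetry_unique {n : ℕ} (hn : 1 ≤ n)
    (H : EE n → ℝ) (hH : ContDiff ℝ ∞ H)
    (U : Set (EE n)) (hU : IsOpen U)
    (hρ : ∀ x ∈ U, elemAction H x ≠ 0)
    (ζ ζ' : EE n → EE n) (hζ : ContDiffOn ℝ ∞ ζ U) (hζ' : ContDiffOn ℝ ∞ ζ' U)
    (hsym : ∀ x ∈ U, lieDeriv ζ (pcForm H) x = 0)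
    (hsym' : ∀ x ∈ U, lieDeriv ζ' (pcForm H) x = 0)
    (hsame : ∀ x ∈ U, pcForm H x (ζ x) = pcForm H x (ζ' x)) :
    ∀ x ∈ U, ζ x = ζ' x :=
  noether_symmetry_unique_general H hH U hU hρ ζ ζ' hζ hζ' hsym hsym' hsame
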